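/- arXiv:2511.12815 — 8 statements merged into one kernel-verified Lean document; each statement's English description precedes it below -/
import Mathlib

section
/- If R is a totally ordered commutative Noetherian ring, then S = R_{≥0} is k-Noetherian: every k-ideal of S is finitely generated as a k-ideal. Moreover, if an ideal I of R is generated by a set D, then the k-ideal I ∩ S of S is generated as a k-ideal by {|x| : x ∈ D}. -/
/-- A k-ideal `J` of a semiring is the k-ideal generated by a set `T` if it is the
smallest k-ideal containing `T`. -/
def IsKIdealGeneratedBy {S : Type*} [CommSemiring S] (J : Ideal S) (T : Set S) : Prop :=
  (∀ x y : S, x ∈ J → x + y ∈ J → y ∈ J) ∧ T ⊆ (J : Set S) ∧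
    ∀ J' : Ideal S, (∀ x y : S, x ∈ J' → x + y ∈ J' → y ∈ J') →
      T ⊆ (J' : Set S) → J ≤ J'

/-!
Every element of `R` is a difference of two nonnegative ones, so the ideal of `R` generated
by a k-ideal `J` of `S = R_{≥0}` consists of the differences `p - n` with `p, n ∈ J`; the
k-property then says that `J` is exactly the nonnegative part of this ideal. Hence k-ideals
of `S` are the nonnegative parts of ideals of `R`, and a generating set `D` of an ideal
yields the k-generators `|d|`, since `d = ±|d|`. Finite generation comes from `R` being
Noetherian.
-/

namespace Ideal

def IsKIdeal {S : Type*} [CommSemiring S] (J : Ideal S) : Prop :=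
  ∀ x y : S, x ∈ J → x + y ∈ J → y ∈ J

variable {R : Type*} [CommRing R] [LinearOrder R] [IsStrictOrderedRing R]

/-- The ideal `I ∩ R_{≥0}` of `R_{≥0}`. -/
def nonnegPart (I : Ideal R) : Ideal {x : R // 0 ≤ x} :=
  I.comap Nonneg.coeRingHom

@[simp]
lemma mem_nonnegPart {I : Ideal R} {x : {x : R // 0 ≤ x}} :
    x ∈ I.nonnegPart ↔ (x : R) ∈ I :=
  Iff.rfl

lemma isKIdeal_nonnegPart (I : Ideal R) : I.nonnegPart.IsKIdeal := by
  intro x y hx hxy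
  rw [mem_nonnegPart, Nonneg.coe_add] at hxy
  simpa using sub_mem hxy (mem_nonnegPart.1 hx)

lemma exists_sub_of_mem_span_coe {J : Ideal {x : R // 0 ≤ x}} {r : R}
    (hr : r ∈ span (((↑) : {x : R // 0 ≤ x} → R) '' J)) :
    ∃ p ∈ J, ∃ n ∈ J, r = p - n := by
  induction hr using Submodule.span_induction with
  | mem _ hx =>
    obtain ⟨p, hp, rfl⟩ := hx
    exact ⟨p, hp, 0, J.zero_mem, by simp⟩
  | zero => exact ⟨0, J.zero_mem, 0, J.zero_mem, by simp⟩
  | add _ _ _ _ hu hv =>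
    obtain ⟨p₁, hp₁, n₁, hn₁, rfl⟩ := hu
    obtain ⟨p₂, hp₂, n₂, hn₂, rfl⟩ := hv
    refine ⟨p₁ + p₂, J.add_mem hp₁ hp₂, n₁ + n₂, J.add_mem hn₁ hn₂, ?_⟩
    push_cast
    ring
  | smul a _ _ hu =>
    obtain ⟨p, hp, n, hn, rfl⟩ := hu
    let aPos : {x : R // 0 ≤ x} := ⟨a⁺, posPart_nonneg a⟩
    let aNeg : {x : R // 0 ≤ x} := ⟨a⁻, negPart_nonneg a⟩
    refine ⟨aPos * p + aNeg * n, J.add_mem (J.mul_mem_left _ hp) (J.mul_mem_left _ hn),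
      aPos * n + aNeg * p, J.add_mem (J.mul_mem_left _ hn) (J.mul_mem_left _ hp), ?_⟩
    rw [smul_eq_mul, ← posPart_sub_negPart a]
    push_cast [aPos, aNeg]
    ring

lemma IsKIdeal.nonnegPart_span_coe {J : Ideal {x : R // 0 ≤ x}} (hJ : J.IsKIdeal) :
    (span (((↑) : {x : R // 0 ≤ x} → R) '' J)).nonnegPart = J := by
  refine le_antisymm (fun x hx => ?_) (fun x hx => subset_span ⟨x, hx, rfl⟩)
  obtain ⟨p, hp, n, hn, hx⟩ := exists_sub_of_mem_span_coe (mem_nonnegPart.1 hx)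
  have : n + x = p := Subtype.ext (by push_cast; rw [hx]; ring)
  exact hJ n x hn (this ▸ hp)

lemma isKIdealGeneratedBy_abs (D : Set R) :
    IsKIdealGeneratedBy (span D).nonnegPart
      {x : {x : R // 0 ≤ x} | ∃ d ∈ D, (x : R) = |d|} := by
  refine ⟨isKIdeal_nonnegPart _, ?_, fun J hJ hD => ?_⟩
  · rintro x ⟨d, hd, hx⟩
    rw [SetLike.mem_coe, mem_nonnegPart, hx]
    rcases abs_choice d with h | h <;> rw [h]
    exacts [subset_span hd, neg_mem (subset_span hd)]
  · rw [← IsKIdeal.nonnegPart_span_coe hJ]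
    refine comap_mono (span_le.2 fun d hd => ?_)
    have habs : |d| ∈ span (((↑) : {x : R // 0 ≤ x} → R) '' J) :=
      subset_span ⟨⟨|d|, abs_nonneg d⟩, hD ⟨d, hd, rfl⟩, rfl⟩
    rcases abs_choice d with h | h <;> rw [h] at habs
    exacts [habs, neg_neg d ▸ neg_mem habs]

end Ideal

open Ideal in
/-- If `R` is a totally ordered commutative Noetherian ring, then `S = R_{≥0}` is
k-Noetherian: every k-ideal of `S` is finitely generated as a k-ideal. Moreover, if
an ideal `I` of `R` is generated by a set `D`, then the k-ideal `I ∩ S` is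
generated as a k-ideal by `{|x| : x ∈ D}`. -/
theorem stmt_8 (R : Type*) [CommRing R] [LinearOrder R] [IsStrictOrderedRing R] [IsNoetherianRing R] :
    (∀ J : Ideal {x : R // 0 ≤ x},
      (∀ x y : {x : R // 0 ≤ x}, x ∈ J → x + y ∈ J → y ∈ J) →
      ∃ T : Finset {x : R // 0 ≤ x}, IsKIdealGeneratedBy J (T : Set {x : R // 0 ≤ x})) ∧
    (∀ (D : Set R) (J : Ideal {x : R // 0 ≤ x}),
      (∀ x : {x : R // 0 ≤ x}, x ∈ J ↔ (x : R) ∈ Ideal.span D) →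
      IsKIdealGeneratedBy J {x : {x : R // 0 ≤ x} | ∃ d ∈ D, (x : R) = |d|}) := by
  constructor
  · intro J hJ
    obtain ⟨F, hF⟩ := IsNoetherian.noetherian (span (((↑) : {x : R // 0 ≤ x} → R) '' J))
    refine ⟨F.image fun d => ⟨|d|, abs_nonneg d⟩, ?_⟩
    convert isKIdealGeneratedBy_abs (F : Set R)
    · rw [submodule_span_eq] at hF
      rw [hF, IsKIdeal.nonnegPart_span_coe hJ]
    · ext x
      simp [Subtype.ext_iff, eq_comm]
  · intro D J hJ
    obtain rfl : J = (span D).nonnegPart := Ideal.ext fun x => (hJ x).trans mem_nonnegPart.symm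
    exact isKIdealGeneratedBy_abs D
end

section
/- In the polynomial semiring B[X] over the Boolean semiring B = {0,1} (with 1 + 1 = 1), the congruence generated by all pairs (X^n + 1, X^m + 1) for n, m ≥ 1 is not finitely generated. -/
/-- The Boolean semifield `{0, 1}` with `1 + 1 = 1`. -/
def BoolSemifield : Type := Bool

namespace BoolSemifield

instance : DecidableEq BoolSemifield := instDecidableEqBool
instance : Fintype BoolSemifield := Bool.fintype
instance : Zero BoolSemifield := ⟨(false : Bool)⟩
instance : One BoolSemifield := ⟨(true : Bool)⟩
instance : Add BoolSemifield := ⟨fun a b => (a || b : Bool)⟩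
instance : Mul BoolSemifield := ⟨fun a b => (a && b : Bool)⟩

instance : CommSemiring BoolSemifield where
  add_assoc := by decide
  zero_add := by decide
  add_zero := by decide
  add_comm := by decide
  mul_assoc := by decide
  one_mul := by decide
  mul_one := by decide
  zero_mul := by decide
  mul_zero := by decide
  left_distrib := by decide
  right_distrib := by decide
  mul_comm := by decide
  nsmul := nsmulRec

end BoolSemifield

/-!
For `k : ℕ`, `gapClosure k A` enlarges `A ⊆ ℕ` by every `x ≥ a` for which `A` also contains some
`b` with `a < b ≤ a + k`. Over `B` the support turns `+` into `∪` and `*` into Minkowski sum, and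
the closure is compatible with both, so equality of closed supports is a congruence `gapCon k`;
these congruences increase with `k`. Each generator `(X^n + 1, X^m + 1)` lies in
`gapCon (max n m)`, since both supports close up to all of `ℕ`. A finite generating set would
therefore lie in a single `gapCon k`, and so would every generator; but `X + 1` and
`X^(k+2) + 1` are not `gapCon k`-related, as `1` is not in the closure of `{0, k + 2}`.
-/

open Polynomial Pointwise Set

namespace BoolSemifield

theorem add_eq_zero_iff (a b : BoolSemifield) : a + b = 0 ↔ a = 0 ∧ b = 0 := by
  revert a b; decide

theorem mul_eq_zero_iff (a b : BoolSemifield) : a * b = 0 ↔ a = 0 ∨ b = 0 := by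
  revert a b; decide

theorem sum_eq_zero_iff {ι : Type*} (s : Finset ι) (f : ι → BoolSemifield) :
    ∑ i ∈ s, f i = 0 ↔ ∀ i ∈ s, f i = 0 := by
  classical
  induction s using Finset.induction_on with
  | empty => simp
  | insert i s hi ih => rw [Finset.sum_insert hi, add_eq_zero_iff, ih, Finset.forall_mem_insert]

theorem coe_support_add (f g : BoolSemifield[X]) :
    ((f + g).support : Set ℕ) = (f.support : Set ℕ) ∪ g.support := by
  ext n
  simp only [mem_union, Finset.mem_coe, mem_support_iff, coeff_add, ne_eq,
    add_eq_zero_iff, not_and_or]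

theorem coe_support_mul (f g : BoolSemifield[X]) :
    ((f * g).support : Set ℕ) = (f.support : Set ℕ) + g.support := by
  ext n
  simp only [Finset.mem_coe, mem_support_iff, coeff_mul, ne_eq, sum_eq_zero_iff, mul_eq_zero_iff,
    not_forall, not_or, mem_add, Finset.HasAntidiagonal.mem_antidiagonal, Prod.exists, exists_prop]
  grind

theorem coe_support_X_pow_add_one (n : ℕ) :
    (((X : BoolSemifield[X]) ^ n + 1).support : Set ℕ) = {0, n} := by
  ext j
  simp only [Finset.mem_coe, mem_support_iff, coeff_add, coeff_X_pow, coeff_one, mem_insert_iff,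
    mem_singleton_iff]
  split_ifs <;> simp_all [show (1 + 1 : BoolSemifield) ≠ 0 by decide]

end BoolSemifield

namespace RingCon

variable {R ι : Type*} [Add R] [Mul R] [Preorder ι] [IsDirectedOrder ι] {c : ι → RingCon R}

theorem exists_rel_and_rel_of_monotone (hc : Monotone c) {x y x' y' : R} (h : ∃ i, c i x y)
    (h' : ∃ i, c i x' y') : ∃ i, c i x y ∧ c i x' y' := by
  obtain ⟨i, hi⟩ := h
  obtain ⟨j, hj⟩ := h'
  obtain ⟨k, hik, hjk⟩ := exists_ge_ge i j
  exact ⟨k, hc hik hi, hc hjk hj⟩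

variable [Nonempty ι]

theorem exists_of_ringConGen_of_monotone (hc : Monotone c) {r : R → R → Prop}
    (hr : ∀ x y, r x y → ∃ i, c i x y) {x y : R} (h : ringConGen r x y) : ∃ i, c i x y := by
  induction h with
  | of x y hxy => exact hr x y hxy
  | refl x => exact ⟨Classical.arbitrary ι, (c _).refl x⟩
  | symm _ ih =>
    obtain ⟨i, hi⟩ := ih
    exact ⟨i, (c i).symm hi⟩
  | trans _ _ ih₁ ih₂ =>
    obtain ⟨i, h₁, h₂⟩ := exists_rel_and_rel_of_monotone hc ih₁ ih₂
    exact ⟨i, (c i).trans h₁ h₂⟩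
  | add _ _ ih₁ ih₂ =>
    obtain ⟨i, h₁, h₂⟩ := exists_rel_and_rel_of_monotone hc ih₁ ih₂
    exact ⟨i, (c i).add h₁ h₂⟩
  | mul _ _ ih₁ ih₂ =>
    obtain ⟨i, h₁, h₂⟩ := exists_rel_and_rel_of_monotone hc ih₁ ih₂
    exact ⟨i, (c i).mul h₁ h₂⟩

theorem exists_ringConGen_le_of_finset_of_monotone (hc : Monotone c) {r : R → R → Prop}
    (hr : ∀ x y, r x y → ∃ i, c i x y) (s : Finset (R × R))
    (hs : ringConGen r = ringConGen (fun x y => (x, y) ∈ s)) : ∃ i, ringConGen r ≤ c i := by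
  have hs_eventually : ∀ p ∈ s, ∀ᶠ i in Filter.atTop, c i p.1 p.2 := by
    intro p hp
    have hp' : ringConGen r p.1 p.2 := hs ▸ RingConGen.Rel.of _ _ hp
    obtain ⟨i, hi⟩ := exists_of_ringConGen_of_monotone hc hr hp'
    exact Filter.eventually_atTop.2 ⟨i, fun j hij => hc hij hi⟩
  obtain ⟨i, hi⟩ := ((Filter.eventually_all_finset s).2 hs_eventually).exists
  exact ⟨i, hs ▸ ringConGen_le.2 fun x y hxy => hi _ hxy⟩

end RingCon

section GapClosure

variable {k k' n : ℕ} {A A' S : Set ℕ}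

def gapClosure (k : ℕ) (A : Set ℕ) : Set ℕ :=
  A ∪ {x | ∃ a ∈ A, ∃ b ∈ A, a < b ∧ b ≤ a + k ∧ a ≤ x}

theorem subset_gapClosure (k : ℕ) (A : Set ℕ) : A ⊆ gapClosure k A :=
  subset_union_left

theorem gapClosure_mono (h : A ⊆ A') : gapClosure k A ⊆ gapClosure k A' := by
  rintro x (hx | ⟨a, ha, b, hb, hab, hbk, hax⟩)
  · exact Or.inl (h hx)
  · exact Or.inr ⟨a, h ha, b, h hb, hab, hbk, hax⟩

theorem gapClosure_subset_gapClosure_of_le (h : k ≤ k') (A : Set ℕ) :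
    gapClosure k A ⊆ gapClosure k' A := by
  rintro x (hx | ⟨a, ha, b, hb, hab, hbk, hax⟩)
  · exact Or.inl hx
  · exact Or.inr ⟨a, ha, b, hb, hab, by omega, hax⟩

theorem gapClosure_gapClosure (k : ℕ) (A : Set ℕ) :
    gapClosure k (gapClosure k A) = gapClosure k A := by
  refine (subset_gapClosure k _).antisymm' ?_
  rintro x (hx | ⟨a, ha, b, hb, hab, hbk, hax⟩)
  · exact hx
  rcases ha with ha | ⟨c, hc, d, hd, hcd, hdk, hca⟩
  · rcases hb with hb | ⟨c, hc, d, hd, hcd, hdk, hcb⟩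
    · exact Or.inr ⟨a, ha, b, hb, hab, hbk, hax⟩
    · rcases le_or_gt c a with hca | hac
      · exact Or.inr ⟨c, hc, d, hd, hcd, hdk, hca.trans hax⟩
      · exact Or.inr ⟨a, ha, c, hc, hac, by omega, hax⟩
  · exact Or.inr ⟨c, hc, d, hd, hcd, hdk, hca.trans hax⟩

theorem gapClosure_eq_of_subset_of_subset (h₁ : A ⊆ S) (h₂ : S ⊆ gapClosure k A) :
    gapClosure k S = gapClosure k A :=
  ((gapClosure_mono h₂).trans (gapClosure_gapClosure k A).subset).antisymm (gapClosure_mono h₁)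

theorem gapClosure_union_gapClosure (k : ℕ) (A C : Set ℕ) :
    gapClosure k (gapClosure k A ∪ gapClosure k C) = gapClosure k (A ∪ C) :=
  gapClosure_eq_of_subset_of_subset
    (union_subset_union (subset_gapClosure k A) (subset_gapClosure k C))
    (union_subset (gapClosure_mono subset_union_left) (gapClosure_mono subset_union_right))

theorem gapClosure_add_gapClosure_subset (k : ℕ) (A C : Set ℕ) :
    gapClosure k A + gapClosure k C ⊆ gapClosure k (A + C) := by
  rintro _ ⟨y, hy, z, hz, rfl⟩
  change y + z ∈ _
  rcases hy with hy | ⟨a, ha, b, hb, hab, hbk, hay⟩ <;>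
    rcases hz with hz | ⟨c, hc, d, hd, hcd, hdk, hcz⟩
  · exact Or.inl (add_mem_add hy hz)
  · exact Or.inr ⟨y + c, add_mem_add hy hc, y + d, add_mem_add hy hd, by omega, by omega, by omega⟩
  · exact Or.inr ⟨a + z, add_mem_add ha hz, b + z, add_mem_add hb hz, by omega, by omega, by omega⟩
  · exact Or.inr ⟨a + c, add_mem_add ha hc, b + c, add_mem_add hb hc, by omega, by omega, by omega⟩

theorem gapClosure_add_gapClosure (k : ℕ) (A C : Set ℕ) :
    gapClosure k (gapClosure k A + gapClosure k C) = gapClosure k (A + C) :=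
  gapClosure_eq_of_subset_of_subset
    (add_subset_add (subset_gapClosure k A) (subset_gapClosure k C))
    (gapClosure_add_gapClosure_subset k A C)

theorem gapClosure_eq_of_le (h : k ≤ k') (hA : gapClosure k A = gapClosure k A') :
    gapClosure k' A = gapClosure k' A' := by
  have key : ∀ A : Set ℕ, gapClosure k' (gapClosure k A) = gapClosure k' A := fun A =>
    gapClosure_eq_of_subset_of_subset (subset_gapClosure k A)
      (gapClosure_subset_gapClosure_of_le h A)
  rw [← key A, hA, key A']

theorem gapClosure_pair_eq_univ (hn : 0 < n) (hk : n ≤ k) : gapClosure k {0, n} = univ :=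
  eq_univ_of_forall fun x => Or.inr ⟨0, .inl rfl, n, .inr rfl, hn, by omega, x.zero_le⟩

theorem one_notMem_gapClosure_pair (k : ℕ) : 1 ∉ gapClosure k {0, k + 2} := by
  rintro (h | ⟨a, ha, b, hb, hab, hbk, ha1⟩)
  · simp at h
  · simp only [mem_insert_iff, mem_singleton_iff] at ha hb
    omega

end GapClosure

def gapCon (k : ℕ) : RingCon BoolSemifield[X] where
  r f g := gapClosure k f.support = gapClosure k g.support
  iseqv := ⟨fun _ => rfl, Eq.symm, Eq.trans⟩
  add' {f f' g g'} hf hg := by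
    rw [BoolSemifield.coe_support_add, BoolSemifield.coe_support_add,
      ← gapClosure_union_gapClosure, hf, hg, gapClosure_union_gapClosure]
  mul' {f f' g g'} hf hg := by
    rw [BoolSemifield.coe_support_mul, BoolSemifield.coe_support_mul,
      ← gapClosure_add_gapClosure, hf, hg, gapClosure_add_gapClosure]

theorem gapCon_iff {k : ℕ} {f g : BoolSemifield[X]} :
    gapCon k f g ↔ gapClosure k f.support = gapClosure k g.support := Iff.rfl

theorem gapCon_monotone : Monotone gapCon := fun _ _ h _ _ => gapClosure_eq_of_le h

theorem gapCon_X_pow_add_one {n m : ℕ} (hn : 0 < n) (hm : 0 < m) :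
    gapCon (max n m) (X ^ n + 1) (X ^ m + 1) := by
  rw [gapCon_iff, BoolSemifield.coe_support_X_pow_add_one, BoolSemifield.coe_support_X_pow_add_one,
    gapClosure_pair_eq_univ hn (le_max_left n m), gapClosure_pair_eq_univ hm (le_max_right n m)]

theorem not_gapCon_X_pow_one_add_one (k : ℕ) : ¬ gapCon k (X ^ 1 + 1) (X ^ (k + 2) + 1) := by
  rw [gapCon_iff, BoolSemifield.coe_support_X_pow_add_one, BoolSemifield.coe_support_X_pow_add_one]
  intro h
  have h₁ : 1 ∈ gapClosure k {0, 1} := subset_gapClosure k _ (mem_insert_of_mem 0 rfl)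
  exact one_notMem_gapClosure_pair k (h ▸ h₁)

open Polynomial in
/-- In `B[X]` over the Boolean semifield, the congruence generated by the pairs
`(X^n + 1, X^m + 1)` for `n, m ≥ 1` is not finitely generated. -/
theorem stmt_9 :
    ¬ ∃ s : Finset (Polynomial BoolSemifield × Polynomial BoolSemifield),
      ringConGen (fun a b : Polynomial BoolSemifield =>
          ∃ n m : ℕ, 1 ≤ n ∧ 1 ≤ m ∧ a = X ^ n + 1 ∧ b = X ^ m + 1) =
        ringConGen (fun a b => (a, b) ∈ s) := by
  rintro ⟨s, hs⟩
  have generators_mem : ∀ a b : BoolSemifield[X],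
      (∃ n m : ℕ, 1 ≤ n ∧ 1 ≤ m ∧ a = X ^ n + 1 ∧ b = X ^ m + 1) → ∃ k, gapCon k a b := by
    rintro _ _ ⟨n, m, hn, hm, rfl, rfl⟩
    exact ⟨max n m, gapCon_X_pow_add_one hn hm⟩
  obtain ⟨k, hk⟩ :=
    RingCon.exists_ringConGen_le_of_finset_of_monotone gapCon_monotone generators_mem s hs
  exact not_gapCon_X_pow_one_add_one k
    (hk (RingConGen.Rel.of _ _ ⟨1, k + 2, le_rfl, by omega, rfl, rfl⟩))
end

section
/- The ideal of B[X] generated by {X^n + 1 : n ≥ 1} is not finitely generated; hence B[X] is not a Noetherian semiring. -/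
namespace BoolSemifield

-- With the order `0 < 1`, `B` is canonically ordered, hence zero-sum-free.
instance : PartialOrder BoolSemifield := inferInstanceAs (PartialOrder Bool)

instance : DecidableLE BoolSemifield := inferInstanceAs (DecidableLE Bool)

instance : CanonicallyOrderedAdd BoolSemifield where
  exists_add_of_le := by decide
  le_add_self := by decide
  le_self_add := by decide

instance : NoZeroDivisors BoolSemifield where
  eq_zero_or_eq_zero_of_mul_eq_zero := by decide

instance : Nontrivial BoolSemifield := ⟨⟨0, 1, by decide⟩⟩

end BoolSemifield

theorem Submodule.FG.exists_le_of_le_iSup {R M : Type*} [Semiring R] [AddCommMonoid M]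
    [Module R M] {N : Submodule R M} (hN : N.FG) {ι : Type*} [Nonempty ι]
    {s : ι → Submodule R M} (hs : Directed (· ≤ ·) s) (h : N ≤ ⨆ i, s i) : ∃ i, N ≤ s i := by
  obtain ⟨_, ⟨i, rfl⟩, hi⟩ := (CompleteLattice.isCompactElement_iff_le_of_directed_sSup_le _ _).1
    ((fg_iff_compact N).1 hN) (Set.range s) (Set.range_nonempty s) hs.directedOn_range h
  exact ⟨i, hi⟩

namespace Polynomial

section Semiring

variable {R : Type*} [Semiring R]

def HasShortGap (d : ℕ) (p : R[X]) : Prop :=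
  ∃ a ∈ p.support, ∃ b ∈ p.support, a < b ∧ b ≤ a + d

theorem HasShortGap.ne_zero {d : ℕ} {p : R[X]} (h : HasShortGap d p) : p ≠ 0 := by
  obtain ⟨a, ha, -⟩ := h
  exact support_nonempty.1 ⟨a, ha⟩

theorem HasShortGap.mono {d d' : ℕ} {p : R[X]} (h : HasShortGap d p) (hd : d ≤ d') :
    HasShortGap d' p := by
  obtain ⟨a, ha, b, hb, hab, hbd⟩ := h
  exact ⟨a, ha, b, hb, hab, by omega⟩

theorem hasShortGap_X_pow_add_one_iff [Nontrivial R] {d n : ℕ} :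
    HasShortGap d (X ^ n + 1 : R[X]) ↔ 1 ≤ n ∧ n ≤ d := by
  have hsub : ∀ k ∈ (X ^ n + 1 : R[X]).support, k = n ∨ k = 0 := by
    intro k hk
    by_contra! h
    simp [coeff_X_pow, coeff_one, h.1, h.2] at hk
  have hmem (hn : n ≠ 0) : n ∈ (X ^ n + 1 : R[X]).support ∧ 0 ∈ (X ^ n + 1 : R[X]).support := by
    simp [coeff_X_pow, coeff_one, hn, hn.symm]
  constructor
  · rintro ⟨a, ha, b, hb, hab, hbd⟩
    rcases hsub a ha with rfl | rfl <;> rcases hsub b hb with rfl | rfl <;> omega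
  · rintro ⟨hn, hnd⟩
    exact ⟨0, (hmem (by omega)).2, n, (hmem (by omega)).1, hn, by omega⟩

end Semiring

section CanonicallyOrdered

variable {R : Type*} [CommSemiring R] [PartialOrder R] [CanonicallyOrderedAdd R]

theorem support_subset_support_add_left (p q : R[X]) : p.support ⊆ (p + q).support := by
  intro n hn
  rw [mem_support_iff, coeff_add] at *
  exact fun h => hn (add_eq_zero.1 h).1

theorem add_mem_support_mul [NoZeroDivisors R] {p q : R[X]} {a b : ℕ} (ha : a ∈ p.support)
    (hb : b ∈ q.support) : a + b ∈ (p * q).support := by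
  rw [mem_support_iff] at *
  rw [coeff_mul, Ne, Finset.sum_eq_zero_iff, not_forall]
  exact ⟨(a, b), by simpa using mul_ne_zero ha hb⟩

theorem HasShortGap.add_right {d : ℕ} {p : R[X]} (h : HasShortGap d p) (q : R[X]) :
    HasShortGap d (p + q) := by
  obtain ⟨a, ha, b, hb, hab⟩ := h
  exact ⟨a, support_subset_support_add_left p q ha, b,
    support_subset_support_add_left p q hb, hab⟩

theorem HasShortGap.mul_left [NoZeroDivisors R] {d : ℕ} {p c : R[X]} (h : HasShortGap d p)
    (hc : c ≠ 0) : HasShortGap d (c * p) := by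
  obtain ⟨a, ha, b, hb, hab, hbd⟩ := h
  obtain ⟨e, he⟩ := support_nonempty.2 hc
  exact ⟨e + a, add_mem_support_mul he ha, e + b, add_mem_support_mul he hb, by omega, by omega⟩

variable (R) [NoZeroDivisors R]

def shortGapIdeal (d : ℕ) : Ideal R[X] where
  carrier := {p | p = 0 ∨ HasShortGap d p}
  zero_mem' := Or.inl rfl
  add_mem' := by
    rintro p q (rfl | hp) hq
    · simpa using hq
    · exact Or.inr (hp.add_right q)
  smul_mem' := by
    rintro c p (rfl | hp)
    · simp
    · rcases eq_or_ne c 0 with rfl | hc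
      · simp
      · exact Or.inr (hp.mul_left hc)

theorem mem_shortGapIdeal {d : ℕ} {p : R[X]} :
    p ∈ shortGapIdeal R d ↔ p = 0 ∨ HasShortGap d p :=
  Iff.rfl

theorem shortGapIdeal_mono : Monotone (shortGapIdeal R) :=
  fun _ _ hd _ => Or.imp_right (HasShortGap.mono · hd)

theorem X_pow_add_one_mem_shortGapIdeal_iff [Nontrivial R] {d n : ℕ} (hn : 1 ≤ n) :
    X ^ n + 1 ∈ shortGapIdeal R d ↔ n ≤ d := by
  have hne : (X ^ n + 1 : R[X]) ≠ 0 := (hasShortGap_X_pow_add_one_iff.2 ⟨hn, le_rfl⟩).ne_zero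
  simp [mem_shortGapIdeal, hne, hasShortGap_X_pow_add_one_iff, hn]

theorem not_fg_span_X_pow_add_one [Nontrivial R] :
    ¬ (Ideal.span {p : R[X] | ∃ n : ℕ, 1 ≤ n ∧ p = X ^ n + 1}).FG := by
  intro hfg
  obtain ⟨d, hd⟩ := Submodule.FG.exists_le_of_le_iSup hfg (shortGapIdeal_mono R).directed_le
    (Ideal.span_le.2 fun _ ⟨n, hn, hp⟩ =>
      hp ▸ Submodule.mem_iSup_of_mem n ((X_pow_add_one_mem_shortGapIdeal_iff R hn).2 le_rfl))
  have hmem := hd (Ideal.subset_span ⟨d + 1, by omega, rfl⟩)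
  rw [X_pow_add_one_mem_shortGapIdeal_iff R (by omega)] at hmem
  omega

end CanonicallyOrdered

end Polynomial

open Polynomial in
/-- The ideal of `B[X]` generated by `{X^n + 1 : n ≥ 1}` is not finitely
generated; hence `B[X]` is not a Noetherian semiring. -/
theorem stmt_10 :
    ¬ (Ideal.span {p : Polynomial BoolSemifield | ∃ n : ℕ, 1 ≤ n ∧ p = X ^ n + 1}).FG ∧
    ¬ ∀ I : Ideal (Polynomial BoolSemifield), I.FG :=
  ⟨not_fg_span_X_pow_add_one _, fun h => not_fg_span_X_pow_add_one _ (h _)⟩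
end

section
/- Let R be a commutative semiring. If R does not admit the Boolean semifield B as a quotient (i.e., there is no surjective semiring homomorphism R → B), then R is a ring (every element of R has an additive inverse). -/
section StrongIdeal

variable {R : Type*} [CommSemiring R]

structure IsStrongIdeal (I : Set R) : Prop where
  zero_mem : 0 ∈ I
  add_mem {x y : R} : x ∈ I → y ∈ I → x + y ∈ I
  mul_mem_left (r : R) {x : R} : x ∈ I → r * x ∈ I
  of_add_mem {x y : R} : x + y ∈ I → x ∈ I

namespace IsStrongIdeal

variable {I : Set R}

theorem mul_mem_right (hI : IsStrongIdeal I) {x : R} (r : R) (hx : x ∈ I) : x * r ∈ I :=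
  mul_comm r x ▸ hI.mul_mem_left r hx

theorem of_add_mem_right (hI : IsStrongIdeal I) {x y : R} (h : x + y ∈ I) : y ∈ I :=
  hI.of_add_mem (add_comm x y ▸ h)

theorem add_mem_iff (hI : IsStrongIdeal I) {x y : R} : x + y ∈ I ↔ x ∈ I ∧ y ∈ I :=
  ⟨fun h => ⟨hI.of_add_mem h, hI.of_add_mem_right h⟩, fun h => hI.add_mem h.1 h.2⟩

end IsStrongIdeal

theorem isStrongIdeal_setOf_exists_add_eq_zero : IsStrongIdeal {x : R | ∃ y, x + y = 0} where
  zero_mem := ⟨0, add_zero 0⟩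
  add_mem := by
    rintro x y ⟨x', hx⟩ ⟨y', hy⟩
    exact ⟨x' + y', by rw [add_add_add_comm, hx, hy, add_zero]⟩
  mul_mem_left r := by
    rintro x ⟨x', hx⟩
    exact ⟨r * x', by rw [← mul_add, hx, mul_zero]⟩
  of_add_mem := by
    rintro x y ⟨z, hz⟩
    exact ⟨y + z, by rw [← add_assoc, hz]⟩

theorem isStrongIdeal_sUnion_of_isChain {c : Set (Set R)} (hc : ∀ I ∈ c, IsStrongIdeal I)
    (hchain : IsChain (· ⊆ ·) c) (hne : c.Nonempty) : IsStrongIdeal (⋃₀ c) where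
  zero_mem := by
    obtain ⟨I, hI⟩ := hne
    exact ⟨I, hI, (hc I hI).zero_mem⟩
  add_mem := by
    rintro x y ⟨I, hI, hx⟩ ⟨J, hJ, hy⟩
    rcases hchain.total hI hJ with hIJ | hJI
    · exact ⟨J, hJ, (hc J hJ).add_mem (hIJ hx) hy⟩
    · exact ⟨I, hI, (hc I hI).add_mem hx (hJI hy)⟩
  mul_mem_left r := by
    rintro x ⟨I, hI, hx⟩
    exact ⟨I, hI, (hc I hI).mul_mem_left r hx⟩
  of_add_mem := by
    rintro x y ⟨I, hI, hxy⟩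
    exact ⟨I, hI, (hc I hI).of_add_mem hxy⟩

def strongAdjoin (I : Set R) (a : R) : Set R :=
  {x | ∃ t r, ∃ i ∈ I, x + t = i + r * a}

theorem subset_strongAdjoin (I : Set R) (a : R) : I ⊆ strongAdjoin I a :=
  fun x hx => ⟨0, 0, x, hx, by rw [add_zero, zero_mul, add_zero]⟩

theorem IsStrongIdeal.mem_strongAdjoin_self {I : Set R} (hI : IsStrongIdeal I) (a : R) :
    a ∈ strongAdjoin I a :=
  ⟨0, 1, 0, hI.zero_mem, by rw [add_zero, zero_add, one_mul]⟩

theorem isStrongIdeal_strongAdjoin {I : Set R} (hI : IsStrongIdeal I) (a : R) :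
    IsStrongIdeal (strongAdjoin I a) where
  zero_mem := subset_strongAdjoin I a hI.zero_mem
  add_mem := by
    rintro x y ⟨t, r, i, hi, hx⟩ ⟨t', r', i', hi', hy⟩
    refine ⟨t + t', r + r', i + i', hI.add_mem hi hi', ?_⟩
    calc x + y + (t + t') = (x + t) + (y + t') := add_add_add_comm x y t t'
      _ = (i + r * a) + (i' + r' * a) := by rw [hx, hy]
      _ = (i + i') + (r + r') * a := by ring
  mul_mem_left s := by
    rintro x ⟨t, r, i, hi, hx⟩
    refine ⟨s * t, s * r, s * i, hI.mul_mem_left s hi, ?_⟩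
    calc s * x + s * t = s * (x + t) := (mul_add s x t).symm
      _ = s * i + s * r * a := by rw [hx]; ring
  of_add_mem := by
    rintro x y ⟨t, r, i, hi, hxy⟩
    exact ⟨y + t, r, i, hi, by rw [← add_assoc, hxy]⟩

theorem IsStrongIdeal.one_mem_strongAdjoin_of_maximal {P : Set R}
    (hP : Maximal (fun I => IsStrongIdeal I ∧ (1 : R) ∉ I) P) {a : R} (ha : a ∉ P) :
    ∃ t r, ∃ p ∈ P, 1 + t = p + r * a := by
  by_contra h1
  have hle : strongAdjoin P a ⊆ P :=
    hP.2 ⟨isStrongIdeal_strongAdjoin hP.1.1 a, h1⟩ (subset_strongAdjoin P a)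
  exact ha (hle (hP.1.1.mem_strongAdjoin_self a))

theorem IsStrongIdeal.mem_or_mem_of_maximal {P : Set R}
    (hP : Maximal (fun I => IsStrongIdeal I ∧ (1 : R) ∉ I) P) {x y : R} (hxy : x * y ∈ P) :
    x ∈ P ∨ y ∈ P := by
  obtain ⟨hPI, hP1⟩ := hP.1
  by_contra! hcon
  obtain ⟨t, r, p, hp, ht⟩ := one_mem_strongAdjoin_of_maximal hP hcon.1
  obtain ⟨t', r', p', hp', ht'⟩ := one_mem_strongAdjoin_of_maximal hP hcon.2
  have hprod : (1 + t) * (1 + t') ∈ P := by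
    rw [ht, ht', show (p + r * x) * (p' + r' * y)
        = p * (p' + r' * y) + r * x * p' + r * r' * (x * y) by ring]
    exact hPI.add_mem (hPI.add_mem (hPI.mul_mem_right _ hp) (hPI.mul_mem_left _ hp'))
      (hPI.mul_mem_left _ hxy)
  rw [show (1 + t) * (1 + t') = 1 + (t + t' + t * t') by ring] at hprod
  exact hP1 (hPI.of_add_mem hprod)

theorem exists_maximal_isStrongIdeal_one_not_mem (h1 : ∀ y : R, 1 + y ≠ 0) :
    ∃ P, Maximal (fun I : Set R => IsStrongIdeal I ∧ (1 : R) ∉ I) P := by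
  obtain ⟨P, -, hP⟩ := zorn_subset_nonempty {I : Set R | IsStrongIdeal I ∧ (1 : R) ∉ I}
    (fun c hc hchain hne =>
      ⟨⋃₀ c, ⟨isStrongIdeal_sUnion_of_isChain (fun I hI => (hc hI).1) hchain hne,
        fun ⟨I, hI, h1I⟩ => (hc hI).2 h1I⟩, fun _ => Set.subset_sUnion_of_mem⟩)
    _ ⟨isStrongIdeal_setOf_exists_add_eq_zero, fun ⟨y, hy⟩ => h1 y hy⟩
  exact ⟨P, hP⟩

end StrongIdeal

section ToBoolSemifield

open Classical

variable {R : Type*} [CommSemiring R] {P : Set R}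

noncomputable def BoolSemifield.ringHomOfPrime (hP : IsStrongIdeal P) (hP1 : (1 : R) ∉ P)
    (hprime : ∀ {x y : R}, x * y ∈ P → x ∈ P ∨ y ∈ P) : R →+* BoolSemifield where
  toFun x := (decide (x ∉ P) : Bool)
  map_one' := decide_eq_true hP1
  map_zero' := decide_eq_false (not_not.2 hP.zero_mem)
  map_mul' x y := by
    have hmul : x * y ∉ P ↔ x ∉ P ∧ y ∉ P :=
      ⟨fun h => ⟨fun hx => h (hP.mul_mem_right y hx), fun hy => h (hP.mul_mem_left x hy)⟩,
        fun h hxy => (hprime hxy).elim h.1 h.2⟩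
    exact (decide_eq_decide.2 hmul).trans (Bool.decide_and _ _)
  map_add' x y := by
    have hadd : x + y ∉ P ↔ x ∉ P ∨ y ∉ P := by rw [hP.add_mem_iff, not_and_or]
    exact (decide_eq_decide.2 hadd).trans (Bool.decide_or _ _)

theorem BoolSemifield.ringHomOfPrime_surjective (hP : IsStrongIdeal P) (hP1 : (1 : R) ∉ P)
    (hprime : ∀ {x y : R}, x * y ∈ P → x ∈ P ∨ y ∈ P) :
    Function.Surjective (ringHomOfPrime hP hP1 hprime) := by
  intro b
  cases b
  · exact ⟨0, map_zero _⟩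
  · exact ⟨1, map_one _⟩

end ToBoolSemifield

theorem exists_surjective_ringHom_boolSemifield {R : Type*} [CommSemiring R]
    (h1 : ∀ y : R, 1 + y ≠ 0) : ∃ f : R →+* BoolSemifield, Function.Surjective f := by
  obtain ⟨P, hP⟩ := exists_maximal_isStrongIdeal_one_not_mem h1
  exact ⟨_, BoolSemifield.ringHomOfPrime_surjective hP.1.1 hP.1.2
    (IsStrongIdeal.mem_or_mem_of_maximal hP)⟩

/-- Borger–Grinberg: a commutative semiring which does not admit the Boolean
semifield as a quotient is a ring. -/
theorem stmt_13 {R : Type*} [CommSemiring R]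
    (h : ¬ ∃ f : R →+* BoolSemifield, Function.Surjective f) :
    ∀ x : R, ∃ y : R, x + y = 0 := by
  obtain ⟨y, hy⟩ : ∃ y : R, 1 + y = 0 := by
    by_contra! h1
    exact h (exists_surjective_ringHom_boolSemifield h1)
  intro x
  exact ⟨x * y, by rw [← mul_one_add, hy, mul_zero]⟩
end

section
/- Let A be a commutative semiring with a congruence ~, and suppose x ~ x + y for some x, y ∈ A. Then for every n ≥ 1, x^n ~ x^n + y^n. -/
/-! Pass to the quotient semiring, where the hypothesis is the equation `x = x + y`. There
`x = x + y` and `a = a + b` give `a * x = a * x + b * x` and `b * x = b * x + b * y`, so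
both `a * x` and `a * x + b * y` equal `a * x + b * x + b * y`; induction on `n` finishes. -/

theorem mul_eq_mul_add_mul_of_eq_add {R : Type*} [Semiring R] {a b x y : R}
    (ha : a = a + b) (hx : x = x + y) : a * x = a * x + b * y := by
  have hax : a * x = a * x + b * x := by rw [← add_mul, ← ha]
  have hbx : b * x = b * x + b * y := by rw [← mul_add, ← hx]
  calc a * x = a * x + b * x + b * y := by rw [add_assoc, ← hbx, ← hax]
    _ = a * x + b * y := by rw [← hax]

theorem pow_eq_pow_add_pow_of_eq_add {R : Type*} [Semiring R] {x y : R} (h : x = x + y)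
    {n : ℕ} (hn : 1 ≤ n) : x ^ n = x ^ n + y ^ n := by
  induction n, hn using Nat.le_induction with
  | base => simpa using h
  | succ n _ ih => simpa only [pow_succ] using mul_eq_mul_add_mul_of_eq_add ih h

/-- If `~` is a congruence on a commutative semiring `A` and `x ~ x + y`, then
`x^n ~ x^n + y^n` for every `n ≥ 1`. -/
theorem stmt_14 {A : Type*} [CommSemiring A] (c : RingCon A) {x y : A}
    (h : c x (x + y)) : ∀ n : ℕ, 1 ≤ n → c (x ^ n) (x ^ n + y ^ n) := by
  intro n hn
  have hq : (x : c.Quotient) = x + y := by rw [← RingCon.coe_add, c.eq]; exact h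
  rw [← c.eq, RingCon.coe_add, RingCon.coe_pow, RingCon.coe_pow]
  exact pow_eq_pow_add_pow_of_eq_add hq hn
end

section
/- Let R be a subring of ℝ all of whose elements are algebraic over ℚ (or more generally integral/algebraic over ℤ), let S = R ∩ [0,∞), and let ~ be a congruence on the semiring S that is not the trivial (diagonal) congruence. Then there exist natural numbers n > m > 1 with n ~ m in S. -/
/-!
If `a ~ a + d` with `d > 0`, algebraicity of `d` gives `d f(d) = d g(d) + l` with `f, g ∈ ℕ[X]` and
`l ≥ 1`. Trading `a + d` for `a` in `(a + d) f(d) + a g(d) ~ a f(d) + (a + d) g(d)` yields `B + l ~ B`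
for `B = a f(d) + a g(d) + d g(d)`. Adding to both sides a nonnegative element of `R` that turns `B`
into an integer `n` gives `n + l ~ n`, and adding `2` makes both sides exceed `1`.
-/

open Polynomial

theorem Polynomial.exists_eq_map_natCast_sub_map_natCast (q : ℤ[X]) :
    ∃ f g : ℕ[X], q = f.map (Nat.castRingHom ℤ) - g.map (Nat.castRingHom ℤ) := by
  induction q using Polynomial.induction_on' with
  | add p q hp hq =>
    obtain ⟨f, g, rfl⟩ := hp
    obtain ⟨f', g', rfl⟩ := hq
    exact ⟨f + f', g + g', by simp only [Polynomial.map_add]; ring⟩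
  | monomial n z =>
    refine ⟨monomial n z.toNat, monomial n (-z).toNat, ?_⟩
    simp only [map_monomial, eq_natCast, ← monomial_sub, Int.toNat_sub_toNat_neg]

theorem IsAlgebraic.exists_mul_aeval_eq_mul_aeval_add_natCast {A : Type*} [Ring A] {s : A}
    (hs : IsAlgebraic ℤ s) (hs0 : s ∈ nonZeroDivisors A) :
    ∃ (f g : ℕ[X]) (l : ℕ), 0 < l ∧ s * aeval s f = s * aeval s g + l := by
  obtain ⟨p, hp0, hp⟩ := hs.exists_nonzero_coeff_and_aeval_eq_zero hs0
  have hdivX : s * aeval s p.divX = -(p.coeff 0 : A) := by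
    have := congrArg (aeval s) (X_mul_divX_add p)
    rw [hp, map_add, map_mul, aeval_X, aeval_C, algebraMap_int_eq, eq_intCast] at this
    exact eq_neg_of_add_eq_zero_left this
  obtain ⟨q, l, hl, hq⟩ : ∃ (q : ℤ[X]) (l : ℕ), 0 < l ∧ s * aeval s q = l := by
    rcases lt_or_gt_of_ne hp0 with hneg | hpos
    · refine ⟨p.divX, (p.coeff 0).natAbs, by omega, ?_⟩
      rw [hdivX, Nat.cast_natAbs, abs_of_neg hneg]; push_cast; rfl
    · refine ⟨-p.divX, (p.coeff 0).natAbs, by omega, ?_⟩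
      rw [map_neg, mul_neg, hdivX, neg_neg, Nat.cast_natAbs, abs_of_pos hpos]
  obtain ⟨f, g, rfl⟩ := q.exists_eq_map_natCast_sub_map_natCast
  have aeval_map (h : ℕ[X]) : aeval s (h.map (Nat.castRingHom ℤ)) = aeval s h :=
    aeval_map_algebraMap ℤ s h
  refine ⟨f, g, l, hl, ?_⟩
  rw [← hq, map_sub, aeval_map, aeval_map, mul_sub, add_sub_cancel]

theorem RingCon.rel_add_of_rel_add_of_mul_eq {M : Type*} [Semiring M] (c : RingCon M)
    {a d f g l : M} (had : c a (a + d)) (hd : d * f = d * g + l) :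
    c (a * f + a * g + d * g + l) (a * f + a * g + d * g) := by
  have h := c.add (c.mul (c.symm had) (c.refl f)) (c.mul had (c.refl g))
  convert h using 1 <;> noncomm_ring [hd]

section NonnegSubsemiring

variable {R : Subring ℝ} {S : Subsemiring ℝ}

theorem exists_add_eq_natCast (hS : ∀ x : ℝ, x ∈ S ↔ x ∈ R ∧ 0 ≤ x) (x : S) :
    ∃ (n : ℕ) (r : S), x + r = n := by
  have hr : (⌈(x : ℝ)⌉₊ : ℝ) - x ∈ S :=
    (hS _).2 ⟨sub_mem (natCast_mem R _) ((hS x).1 x.2).1, sub_nonneg.2 (Nat.le_ceil _)⟩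
  exact ⟨⌈(x : ℝ)⌉₊, ⟨_, hr⟩, Subtype.ext (add_sub_cancel _ _)⟩

theorem exists_rel_natCast_add_natCast (halg : ∀ x : R, IsAlgebraic ℚ (x : ℝ))
    (hS : ∀ x : ℝ, x ∈ S ↔ x ∈ R ∧ 0 ≤ x) (c : RingCon S) {a b : S} (hab : c a b)
    (hlt : a < b) : ∃ n l : ℕ, 0 < l ∧ c ((n + l : ℕ) : S) n := by
  have hdR : (b : ℝ) - a ∈ R := sub_mem ((hS b).1 b.2).1 ((hS a).1 a.2).1
  set d : S := ⟨b - a, (hS _).2 ⟨hdR, sub_nonneg.2 hlt.le⟩⟩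
  have hb : b = a + d := Subtype.ext (by simp [d])
  have hd : IsAlgebraic ℤ (d : ℝ) := (IsFractionRing.isAlgebraic_iff ℤ ℚ ℝ).2 (halg ⟨_, hdR⟩)
  obtain ⟨f, g, l, hl, hfg⟩ := hd.exists_mul_aeval_eq_mul_aeval_add_natCast
    (mem_nonZeroDivisors_of_ne_zero (sub_ne_zero.2 (Subtype.coe_injective.ne hlt.ne')))
  have hfgS : d * aeval d f = d * aeval d g + l := by
    have coe_aeval (h : ℕ[X]) : ((aeval d h : S) : ℝ) = aeval (d : ℝ) h :=
      (aeval_algHom_apply S.subtype.toNatAlgHom d h).symm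
    apply Subtype.ext
    simp only [Subsemiring.coe_mul, Subsemiring.coe_add, coe_aeval]
    exact hfg
  have hB := c.rel_add_of_rel_add_of_mul_eq (hb ▸ hab) hfgS
  obtain ⟨n, r, hn⟩ := exists_add_eq_natCast hS (a * aeval d f + a * aeval d g + d * aeval d g)
  refine ⟨n, l, hl, ?_⟩
  have := c.add hB (c.refl r)
  rwa [add_right_comm, hn, ← Nat.cast_add] at this

end NonnegSubsemiring

/-- Let `R` be a subring of `ℝ` whose elements are algebraic over `ℚ`, let `S` be
the subsemiring of nonnegative elements of `R`, and let `c` be a non-diagonal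
congruence on `S`. Then there are natural numbers `n > m > 1` with `n ~ m`. -/
theorem stmt_15 (R : Subring ℝ) (halg : ∀ x : R, IsAlgebraic ℚ (x : ℝ))
    (S : Subsemiring ℝ) (hS : ∀ x : ℝ, x ∈ S ↔ x ∈ R ∧ 0 ≤ x)
    (c : RingCon S) (hc : ∃ a b : S, c a b ∧ a ≠ b) :
    ∃ n m : ℕ, 1 < m ∧ m < n ∧ c (n : S) (m : S) := by
  obtain ⟨a, b, hab, hne⟩ := hc
  obtain ⟨n, l, hl, hnl⟩ : ∃ n l : ℕ, 0 < l ∧ c ((n + l : ℕ) : S) n := by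
    rcases hne.lt_or_gt with hlt | hgt
    · exact exists_rel_natCast_add_natCast halg hS c hab hlt
    · exact exists_rel_natCast_add_natCast halg hS c (c.symm hab) hgt
  refine ⟨n + l + 2, n + 2, by omega, by omega, ?_⟩
  have := c.add hnl (c.refl 2)
  push_cast at this ⊢
  exact this
end

section
/- Let R be a subring of ℝ, S = R_{≥0}, and ~ a congruence on the semiring S. For x ∈ S define I_x = {y ∈ S : y + x ~ x}. Then (a) I_x is a k-ideal of S; (b) x ≤ y implies I_x ⊆ I_y; (c) if I_t ≠ {0} then I_x = I_t for every x ≥ t. -/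
/-!
Adding an element of `I x` to `x` does not change its class, so `I x` is closed under addition
and, since `r * x + s * x = x` when `r + s = 1`, under multiplication by every `r ≤ 1` of `S`;
an arbitrary `r ∈ S` is `⌊r⌋₊` plus such an element. If `0 ≠ a ∈ I t`, then `t + n • a ~ t` for
every `n`, and by the Archimedean property `t ≤ x ≤ t + n • a` for some `n`, which squeezes
`I x` between `I t` and `I (t + n • a) = I t`.
-/

namespace RingCon

section Semiring

variable {S : Type*} [Semiring S] (c : RingCon S)

def absorbers (x : S) : Set S := {y | c (y + x) x}

variable {c}

theorem mem_absorbers {x y : S} : y ∈ c.absorbers x ↔ c (y + x) x := Iff.rfl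

theorem zero_mem_absorbers (x : S) : 0 ∈ c.absorbers x := by
  simpa [mem_absorbers] using c.refl x

theorem add_mem_absorbers {x a b : S} (ha : a ∈ c.absorbers x) (hb : b ∈ c.absorbers x) :
    a + b ∈ c.absorbers x := by
  rw [mem_absorbers, add_assoc]
  exact c.trans (c.add (c.refl a) hb) ha

theorem nsmul_mem_absorbers {x a : S} (ha : a ∈ c.absorbers x) (n : ℕ) :
    n • a ∈ c.absorbers x := by
  induction n with
  | zero => simpa using zero_mem_absorbers x
  | succ n ih => rw [succ_nsmul]; exact add_mem_absorbers ih ha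

theorem mem_absorbers_of_add_mem {x a b : S} (ha : a ∈ c.absorbers x)
    (hab : a + b ∈ c.absorbers x) : b ∈ c.absorbers x := by
  have hba : c (b + x) (b + (a + x)) := c.add (c.refl b) (c.symm ha)
  rw [← add_assoc, add_comm b a] at hba
  exact c.trans hba hab

theorem mul_mem_absorbers_of_add_eq_one {x a r s : S} (hrs : r + s = 1)
    (ha : a ∈ c.absorbers x) : r * a ∈ c.absorbers x := by
  have h : c (r * (a + x) + s * x) (r * x + s * x) := c.add (c.mul (c.refl r) ha) (c.refl _)
  rwa [mul_add, add_assoc, ← add_mul, hrs, one_mul] at h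

theorem absorbers_subset_add (x d : S) : c.absorbers x ⊆ c.absorbers (x + d) := fun y hy => by
  rw [mem_absorbers, ← add_assoc]
  exact c.add hy (c.refl d)

theorem absorbers_eq_of_rel {u t : S} (hut : c u t) : c.absorbers u = c.absorbers t := by
  ext y
  exact ⟨fun hy => c.trans (c.trans (c.add (c.refl y) (c.symm hut)) hy) hut,
    fun hy => c.trans (c.trans (c.add (c.refl y) hut) hy) (c.symm hut)⟩

theorem add_nsmul_rel {t a : S} (ha : a ∈ c.absorbers t) (n : ℕ) : c (t + n • a) t := by
  rw [add_comm]
  exact nsmul_mem_absorbers ha n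

end Semiring

section Real

variable {S : Subsemiring ℝ} {c : RingCon S}

theorem absorbers_mono (hsub : ∀ x y : S, (x : ℝ) ≤ y → ∃ d : S, y = x + d) {x y : S}
    (hxy : (x : ℝ) ≤ y) : c.absorbers x ⊆ c.absorbers y := by
  obtain ⟨d, rfl⟩ := hsub x y hxy
  exact absorbers_subset_add x d

theorem mul_mem_absorbers (hsub : ∀ x y : S, (x : ℝ) ≤ y → ∃ d : S, y = x + d)
    (hnonneg : ∀ x : S, 0 ≤ (x : ℝ)) {x a : S}
    (ha : a ∈ c.absorbers x) (r : S) : r * a ∈ c.absorbers x := by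
  set n := ⌊(r : ℝ)⌋₊
  have hnr : ((n : S) : ℝ) ≤ r := Nat.floor_le (hnonneg r)
  obtain ⟨f, hf⟩ := hsub n r hnr
  have hf1 : (f : ℝ) ≤ 1 := by
    have hr : (r : ℝ) = n + f := by rw [hf]; push_cast; rfl
    linarith [Nat.lt_floor_add_one (r : ℝ)]
  obtain ⟨s, hs⟩ := hsub f 1 (by simpa only [Subsemiring.coe_one] using hf1)
  rw [hf, add_mul, ← nsmul_eq_mul]
  exact add_mem_absorbers (nsmul_mem_absorbers ha n)
    (mul_mem_absorbers_of_add_eq_one hs.symm ha)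

theorem absorbers_eq_of_le (hsub : ∀ x y : S, (x : ℝ) ≤ y → ∃ d : S, y = x + d)
    (hnonneg : ∀ x : S, 0 ≤ (x : ℝ)) {t x : S}
    (hne : c.absorbers t ≠ {0}) (htx : (t : ℝ) ≤ x) : c.absorbers x = c.absorbers t := by
  obtain ⟨a, ha, ha0⟩ : ∃ a ∈ c.absorbers t, a ≠ 0 := by
    by_contra! h
    exact hne (Set.eq_singleton_iff_unique_mem.2 ⟨zero_mem_absorbers t, h⟩)
  have hapos : 0 < (a : ℝ) :=
    (hnonneg a).lt_of_ne' fun h => ha0 (Subtype.ext h)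
  obtain ⟨n, hn⟩ := Archimedean.arch (x : ℝ) hapos
  have hxu : (x : ℝ) ≤ (t + n • a : S) := by
    push_cast
    linarith [hnonneg t]
  refine (absorbers_mono hsub htx).antisymm' ?_
  rw [← absorbers_eq_of_rel (add_nsmul_rel ha n)]
  exact absorbers_mono hsub hxu

end Real

end RingCon

open RingCon

/-- Let `R` be a subring of `ℝ`, `S = R_{≥0}` and `c` a congruence on `S`. For
`x ∈ S` set `I x = {y : y + x ~ x}`. Then (a) each `I x` is a k-ideal of `S`;
(b) `x ≤ y` implies `I x ⊆ I y`; (c) if `I t ≠ {0}` then `I x = I t` for `x ≥ t`. -/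
theorem stmt_16 (R : Subring ℝ) (S : Subsemiring ℝ)
    (hS : ∀ x : ℝ, x ∈ S ↔ x ∈ R ∧ 0 ≤ x) (c : RingCon S) :
    let I : S → Set S := fun x => {y : S | c (y + x) x}
    (∀ x : S,
      (0 ∈ I x) ∧
      (∀ a b : S, a ∈ I x → b ∈ I x → a + b ∈ I x) ∧
      (∀ a : S, a ∈ I x → ∀ r : S, r * a ∈ I x) ∧
      (∀ a b : S, a ∈ I x → a + b ∈ I x → b ∈ I x)) ∧
    (∀ x y : S, (x : ℝ) ≤ (y : ℝ) → I x ⊆ I y) ∧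
    (∀ t x : S, I t ≠ {0} → (t : ℝ) ≤ (x : ℝ) → I x = I t) := by
  have hnonneg : ∀ x : S, 0 ≤ (x : ℝ) := fun x => ((hS x).1 x.2).2
  have hsub : ∀ x y : S, (x : ℝ) ≤ y → ∃ d : S, y = x + d := fun x y hxy =>
    ⟨⟨y - x, (hS _).2 ⟨sub_mem ((hS y).1 y.2).1 ((hS x).1 x.2).1, sub_nonneg.2 hxy⟩⟩,
      Subtype.ext (by simp)⟩
  exact ⟨fun x => ⟨zero_mem_absorbers x, fun _ _ => add_mem_absorbers,
      fun _ ha => mul_mem_absorbers hsub hnonneg ha, fun _ _ => mem_absorbers_of_add_mem⟩,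
    fun _ _ => absorbers_mono hsub, fun _ _ => absorbers_eq_of_le hsub hnonneg⟩
end

section
/- Let S be a cancellative commutative semiring, R = S ⊗_ℕ ℤ its Grothendieck ring, and M an S-module generated by n elements m₁, ..., m_n. If the base change M ⊗_S R is a free R-module of rank n with basis the images of m₁, ..., m_n, then M is a free S-module with basis m₁, ..., m_n. -/
open scoped TensorProduct

section BaseChange

variable {S R M ι : Type*} [CommSemiring S] [Semiring R] [Algebra S R]
  [AddCommMonoid M] [Module S M]

theorem TensorProduct.one_tmul_sum_smul (s : Finset ι) (c : ι → S) (m : ι → M) :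
    (1 : R) ⊗ₜ[S] (∑ i ∈ s, c i • m i) = ∑ i ∈ s, algebraMap S R (c i) • ((1 : R) ⊗ₜ[S] m i) := by
  simp only [TensorProduct.tmul_sum, TensorProduct.tmul_smul, algebraMap_smul]

theorem injective_sum_smul_of_baseChange [Fintype ι] (m : ι → M)
    (hinj : Function.Injective (algebraMap S R))
    (hR : Function.Injective fun c : ι → R => ∑ i, c i • ((1 : R) ⊗ₜ[S] m i)) :
    Function.Injective fun c : ι → S => ∑ i, c i • m i := by
  intro c c' h
  have hc : (fun i => algebraMap S R (c i)) = fun i => algebraMap S R (c' i) := by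
    apply hR
    simp only [← TensorProduct.one_tmul_sum_smul]
    exact congrArg ((1 : R) ⊗ₜ[S] ·) h
  exact funext fun i => hinj (congrFun hc i)

end BaseChange

theorem stmt_17_general {S R M : Type*} [CommSemiring S] [CommRing R] [Algebra S R]
    [AddCommMonoid M] [Module S M]
    (hinj : Function.Injective (algebraMap S R))
    {n : ℕ} (m : Fin n → M)
    (hgen : ∀ x : M, ∃ co : Fin n → S, x = ∑ i, co i • m i)
    (hfree : Function.Bijective fun co : Fin n → R =>
      ∑ i, co i • ((1 : R) ⊗ₜ[S] m i : R ⊗[S] M)) :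
    Function.Bijective fun co : Fin n → S => ∑ i, co i • m i :=
  ⟨injective_sum_smul_of_baseChange m hinj hfree.1,
    fun x => (hgen x).imp fun _ hco => hco.symm⟩

/-- Let `S` be a cancellative commutative semiring, `R` its Grothendieck ring
(`S` embeds in `R` and every element of `R` is a difference of elements of `S`),
and `M` an `S`-module generated by `m₁, …, mₙ`. If the base change `R ⊗[S] M` is
free over `R` on the images `1 ⊗ mᵢ`, then `M` is free over `S` on the `mᵢ`. -/
theorem stmt_17 {S R M : Type*} [CommSemiring S] [CommRing R] [Algebra S R]
    [AddCommMonoid M] [Module S M]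
    (hcancel : ∀ a b c : S, a + b = a + c → b = c)
    (hinj : Function.Injective (algebraMap S R))
    (hgroth : ∀ r : R, ∃ a b : S, r = algebraMap S R a - algebraMap S R b)
    {n : ℕ} (m : Fin n → M)
    (hgen : ∀ x : M, ∃ co : Fin n → S, x = ∑ i, co i • m i)
    (hfree : Function.Bijective fun co : Fin n → R =>
      ∑ i, co i • ((1 : R) ⊗ₜ[S] m i : R ⊗[S] M)) :
    Function.Bijective fun co : Fin n → S => ∑ i, co i • m i :=
  stmt_17_general hinj m hgen hfree
end
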